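/- Identify S^1 with the unit circle in ℂ and let A ≠ B be two points of S^1. Then for every n ≥ 1 the open string configuration space G(S^1;A,B,n) has exactly n+1 path-connected components, each of which is contractible; consequently cat(G(S^1;A,B,n)) = n+1. Concretely, writing x_1 = A·exp(2πiφ_1) and x_j = x_{j−1}·exp(2πiφ_j) with (φ_1,...,φ_n) ∈ (0,1)^n and B = A·exp(2πiψ) with ψ ∈ (0,1), a point of the open cube corresponds to a configuration in G(S^1;A,B,n) if and only if ∑_{j=1}^n φ_j − ψ is not an integer, and the hyperplanes ∑_{j=1}^n φ_j = ψ + k, k = 0,1,...,n−1, divide the open cube (0,1)^n into n+1 connected components, each convex and hence contractible. -/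

import Mathlib

/-!
# Statement 17

Identify `S^1` with the unit circle in `ℂ` and let `A ≠ B` be two points of `S^1`.
Then for every `n ≥ 1` the open string configuration space `G(S^1;A,B,n)` has exactly
`n+1` path-connected components, each contractible; consequently
`cat (G(S^1;A,B,n)) = n+1`.  Concretely, in angle coordinates
`x_j = x_{j-1}·exp(2πiφ_j)` with `(φ_1,…,φ_n) ∈ (0,1)^n` and `B = A·exp(2πiψ)`,
`ψ ∈ (0,1)`, a point of the open cube corresponds to a configuration iff
`∑ φ_j - ψ ∉ ℤ`, and the hyperplanes `∑ φ_j = ψ + k`, `k = 0,…,n-1`, divide the open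
cube into `n+1` connected components, each convex, hence contractible.
-/

open scoped Real

noncomputable section

/-- The sequence `A = x_0, x_1, …, x_n, x_{n+1} = B` associated to a configuration. -/
def extendConfig (A B : ℂ) (n : ℕ) (x : Fin n → ℂ) : Fin (n + 2) → ℂ :=
  fun i => if h0 : (i : ℕ) = 0 then A else
    if hl : (i : ℕ) = n + 1 then B else x ⟨(i : ℕ) - 1, by omega⟩

/-- The open string configuration space `G(S^1;A,B,n)` of the unit circle `S^1 ⊂ ℂ`. -/
def circleStringConfigSpace (A B : ℂ) (n : ℕ) : Set (Fin n → ℂ) :=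
  {x | (∀ i, ‖x i‖ = 1) ∧
    ∀ i : Fin (n + 1),
      extendConfig A B n x i.castSucc ≠ extendConfig A B n x i.succ}

/-- `Y` admits a covering by `N` open sets, each contractible to a point in `Y`. -/
def CatLE (Y : Type*) [TopologicalSpace Y] (N : ℕ) : Prop :=
  ∃ U : Fin N → Set Y, (∀ i, IsOpen (U i)) ∧ (⋃ i, U i) = Set.univ ∧
    ∀ i, ∃ y₀ : Y, ContinuousMap.Homotopic
      (⟨Subtype.val, continuous_subtype_val⟩ : C(↥(U i), Y))
      (ContinuousMap.const _ y₀)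

/-- The Lusternik–Schnirelman category of a space. -/
def LScat (Y : Type*) [TopologicalSpace Y] : ℕ∞ :=
  sInf {N : ℕ∞ | ∃ k : ℕ, N = (k : ℕ∞) ∧ CatLE Y k}

/-- The configuration in the circle determined by angle coordinates
`(φ_1,…,φ_n)`: `x_j = A·exp(2πi(φ_1 + ⋯ + φ_j))`. -/
def angleConfig (A : ℂ) (n : ℕ) (φ : Fin n → ℝ) : Fin n → ℂ :=
  fun i => A * Complex.exp (2 * π * Complex.I *
    (∑ j ∈ Finset.univ.filter (fun j : Fin n => j ≤ i), φ j))

/-- relative angle in (0,1): `b = a * exp(2πi t)` -/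
def relT (a b : ℂ) : ℝ := (Complex.arg (-(b / a)) + π) / (2 * π)

lemma slit_aux {a b : ℂ} (ha : ‖a‖ = 1) (hb : ‖b‖ = 1) (hab : a ≠ b) :
    -(b / a) ∈ Complex.slitPlane ∧ Complex.arg (-(b / a)) ∈ Set.Ioo (-π) π := by
  have ha0 : a ≠ 0 := by intro h; simp [h] at ha
  have hw : ‖-(b / a)‖ = 1 := by
    rw [norm_neg, norm_div, ha, hb]; norm_num
  have hw0 : -(b / a) ≠ 0 := by intro h; simp [h] at hw
  have hargne : Complex.arg (-(b / a)) ≠ π := by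
    intro h
    rw [Complex.arg_eq_pi_iff] at h
    have : -(b / a) = ((-(b / a)).re : ℂ) := by
      apply Complex.ext <;> simp [h.2]
    have hre : |(-(b / a)).re| = 1 := by
      rw [this] at hw; simpa using hw
    have : (-(b / a)).re = -1 := by
      rcases abs_eq (by norm_num : (0:ℝ) ≤ 1) |>.mp hre with h1 | h1
      · linarith [h.1]
      · exact h1
    have : b / a = 1 := by
      have hba : -(b/a) = (-1 : ℂ) := by
        rw [‹-(b/a) = ((-(b / a)).re : ℂ)›, this]; norm_num
      have := neg_eq_iff_eq_neg.mp hba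
      rw [this]; norm_num
    exact hab ((div_eq_one_iff_eq ha0).mp this).symm
  refine ⟨Complex.mem_slitPlane_iff_arg.mpr ⟨hargne, hw0⟩, ?_⟩
  exact ⟨Complex.neg_pi_lt_arg _, lt_of_le_of_ne (Complex.arg_le_pi _) hargne⟩

lemma relT_mem_Ioo {a b : ℂ} (ha : ‖a‖ = 1) (hb : ‖b‖ = 1) (hab : a ≠ b) :
    relT a b ∈ Set.Ioo (0:ℝ) 1 := by
  obtain ⟨-, h1, h2⟩ := slit_aux ha hb hab
  constructor
  · rw [relT]; apply div_pos (by linarith) Real.two_pi_pos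
  · rw [relT, div_lt_one Real.two_pi_pos]; linarith

lemma mul_exp_relT {a b : ℂ} (ha : ‖a‖ = 1) (hb : ‖b‖ = 1) (hab : a ≠ b) :
    a * Complex.exp (2 * π * Complex.I * relT a b) = b := by
  have ha0 : a ≠ 0 := by intro h; simp [h] at ha
  have hw : ‖-(b / a)‖ = 1 := by
    rw [norm_neg, norm_div, ha, hb]; norm_num
  have key : Complex.exp (Complex.arg (-(b / a)) * Complex.I) = -(b / a) := by
    have := Complex.norm_mul_exp_arg_mul_I (-(b / a))
    rwa [hw, Complex.ofReal_one, one_mul] at this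
  have hcast : 2 * ↑π * Complex.I * ((relT a b : ℝ) : ℂ)
      = (Complex.arg (-(b / a)) : ℂ) * Complex.I + (π : ℂ) * Complex.I := by
    rw [relT]
    have hπ : (π : ℂ) ≠ 0 := by exact_mod_cast Real.pi_ne_zero
    push_cast
    field_simp
  rw [hcast, Complex.exp_add, key, Complex.exp_pi_mul_I]
  field_simp

lemma relT_eq {a : ℂ} (ha0 : a ≠ 0) {t : ℝ} (ht : t ∈ Set.Ioo (0:ℝ) 1) :
    relT a (a * Complex.exp (2 * π * Complex.I * t)) = t := by
  have hdiv : a * Complex.exp (2 * π * Complex.I * t) / a = Complex.exp (2 * π * Complex.I * t) := by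
    field_simp
  have hexp : -(Complex.exp (2 * π * Complex.I * t)) = Complex.exp (((2*π*t - π : ℝ) : ℂ) * Complex.I) := by
    have : ((2*π*t - π : ℝ) : ℂ) * Complex.I = 2 * π * Complex.I * t + (-π : ℂ) * Complex.I := by
      push_cast; ring
    rw [this, Complex.exp_add]
    have : ((-π : ℂ)) * Complex.I = -((π : ℂ) * Complex.I) := by ring
    rw [this, Complex.exp_neg, Complex.exp_pi_mul_I]
    norm_num
  have harg : Complex.arg (Complex.exp (((2*π*t - π : ℝ) : ℂ) * Complex.I)) = 2*π*t - π := by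
    rw [Complex.exp_mul_I]
    apply Complex.arg_cos_add_sin_mul_I
    constructor
    · nlinarith [Real.pi_pos, ht.1]
    · nlinarith [Real.pi_pos, ht.2]
  rw [relT, hdiv, hexp, harg]
  field_simp
  ring

lemma continuousAt_relT {a b : ℂ} (ha : ‖a‖ = 1) (hb : ‖b‖ = 1) (hab : a ≠ b) :
    ContinuousAt (fun p : ℂ × ℂ => relT p.1 p.2) (a, b) := by
  have ha0 : a ≠ 0 := by intro h; simp [h] at ha
  have hslit := (slit_aux ha hb hab).1
  have h1 : ContinuousAt (fun p : ℂ × ℂ => -(p.2 / p.1)) (a, b) :=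
    (continuousAt_snd.div continuousAt_fst ha0).neg
  have h2 : ContinuousAt Complex.arg (-(b / a)) := Complex.continuousAt_arg hslit
  have h3 : ContinuousAt (fun p : ℂ × ℂ => Complex.arg (-(p.2 / p.1))) (a, b) :=
    ContinuousAt.comp (g := Complex.arg) h2 h1
  unfold relT
  exact (h3.add continuousAt_const).div continuousAt_const Real.two_pi_pos.ne'


attribute [irreducible] relT

/-- partial sums -/
def psum {n : ℕ} (φ : Fin n → ℝ) (i : Fin n) : ℝ :=
  ∑ j ∈ Finset.univ.filter (fun j : Fin n => j ≤ i), φ j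

lemma psum_zero {n : ℕ} (h0 : 0 < n) (φ : Fin n → ℝ) :
    psum φ ⟨0, h0⟩ = φ ⟨0, h0⟩ := by
  rw [psum]
  have : Finset.univ.filter (fun j : Fin n => j ≤ ⟨0, h0⟩) = {⟨0, h0⟩} := by
    ext j
    simp [Fin.le_def, Fin.ext_iff, Nat.le_zero]
  rw [this, Finset.sum_singleton]

lemma psum_succ {n : ℕ} (φ : Fin n → ℝ) (m : ℕ) (h : m + 1 < n) :
    psum φ ⟨m + 1, h⟩ = psum φ ⟨m, by omega⟩ + φ ⟨m + 1, h⟩ := by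
  rw [psum, psum]
  have : Finset.univ.filter (fun j : Fin n => j ≤ ⟨m + 1, h⟩)
      = insert ⟨m + 1, h⟩ (Finset.univ.filter (fun j : Fin n => j ≤ ⟨m, by omega⟩)) := by
    ext j
    simp only [Finset.mem_filter, Finset.mem_univ, true_and, Finset.mem_insert, Fin.le_def,
      Fin.ext_iff]
    omega
  rw [this, Finset.sum_insert (by simp [Fin.le_def])]
  ring

lemma psum_last {n : ℕ} (h0 : 0 < n) (φ : Fin n → ℝ) :
    psum φ ⟨n - 1, by omega⟩ = ∑ j, φ j := by
  rw [psum]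
  congr 1
  ext j
  simp only [Finset.mem_filter, Finset.mem_univ, true_and, Fin.le_def, iff_true]
  have := j.isLt
  omega

lemma angleConfig_eq {A : ℂ} {n : ℕ} (φ : Fin n → ℝ) (i : Fin n) :
    angleConfig A n φ i = A * Complex.exp (2 * π * Complex.I * psum φ i) := rfl

lemma exp_two_pi_add (s t : ℝ) :
    Complex.exp (2 * ↑π * Complex.I * ((s + t : ℝ) : ℂ))
      = Complex.exp (2 * ↑π * Complex.I * s) * Complex.exp (2 * ↑π * Complex.I * t) := by
  rw [← Complex.exp_add]
  congr 1
  push_cast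
  ring

lemma angleConfig_succ {A : ℂ} {n : ℕ} (φ : Fin n → ℝ) (m : ℕ) (h : m + 1 < n) :
    angleConfig A n φ ⟨m + 1, h⟩
      = angleConfig A n φ ⟨m, by omega⟩ * Complex.exp (2 * π * Complex.I * φ ⟨m + 1, h⟩) := by
  rw [angleConfig_eq, angleConfig_eq, psum_succ φ m h, exp_two_pi_add]
  ring

lemma norm_angleConfig {A : ℂ} (hA : ‖A‖ = 1) {n : ℕ} (φ : Fin n → ℝ) (i : Fin n) :
    ‖angleConfig A n φ i‖ = 1 := by
  rw [angleConfig_eq, norm_mul, hA, one_mul]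
  have : 2 * ↑π * Complex.I * ((psum φ i : ℝ) : ℂ) = ((2 * π * psum φ i : ℝ) : ℂ) * Complex.I := by
    push_cast; ring
  rw [this, Complex.norm_exp_ofReal_mul_I]

-- extendConfig computation
lemma extendConfig_zero {A B : ℂ} {n : ℕ} (x : Fin n → ℂ) (h : (0:ℕ) < n + 2) :
    extendConfig A B n x ⟨0, h⟩ = A := by simp [extendConfig]

lemma extendConfig_last {A B : ℂ} {n : ℕ} (x : Fin n → ℂ) (h : n + 1 < n + 2) :
    extendConfig A B n x ⟨n + 1, h⟩ = B := by simp [extendConfig]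

lemma extendConfig_mid {A B : ℂ} {n : ℕ} (x : Fin n → ℂ) (m : ℕ) (hm2 : m + 1 < n + 2)
    (hmn : m < n) : extendConfig A B n x ⟨m + 1, hm2⟩ = x ⟨m, hmn⟩ := by
  have h1 : m + 1 ≠ 0 := Nat.succ_ne_zero m
  have h2 : m + 1 ≠ n + 1 := by omega
  simp [extendConfig, h1, h2, show m ≠ n by omega]

lemma extendConfig_n {A B : ℂ} {n : ℕ} (x : Fin n → ℂ) (hn : 1 ≤ n) (h : n < n + 2) :
    extendConfig A B n x ⟨n, h⟩ = x ⟨n - 1, Nat.sub_lt hn Nat.one_pos⟩ := by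
  have h0 : n ≠ 0 := by omega
  have h1 : n ≠ n + 1 := by omega
  simp [extendConfig, h0, h1]

set_option maxHeartbeats 1000000 in
lemma mem_config_iff {A B : ℂ} {n : ℕ} (hn : 1 ≤ n) (x : Fin n → ℂ) :
    x ∈ circleStringConfigSpace A B n ↔
      (∀ i, ‖x i‖ = 1) ∧ (A ≠ x ⟨0, hn⟩) ∧
      (∀ m : ℕ, (h : m + 1 < n) → x ⟨m, Nat.lt_of_succ_lt h⟩ ≠ x ⟨m + 1, h⟩) ∧
      x ⟨n - 1, Nat.sub_lt hn Nat.one_pos⟩ ≠ B := by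
  constructor
  · rintro ⟨hnorm, hne⟩
    refine ⟨hnorm, ?_, ?_, ?_⟩
    · have := hne ⟨0, Nat.succ_pos n⟩
      have c1 : (⟨0, Nat.succ_pos n⟩ : Fin (n+1)).castSucc = ⟨0, Nat.succ_pos (n+1)⟩ := rfl
      have c2 : (⟨0, Nat.succ_pos n⟩ : Fin (n+1)).succ
          = ⟨0 + 1, Nat.succ_lt_succ (Nat.succ_pos n)⟩ := rfl
      rw [c1, c2, extendConfig_zero, extendConfig_mid x 0 _ hn] at this
      exact this
    · intro m h
      have hm1 : m + 1 < n + 1 := Nat.lt_succ_of_lt h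
      have := hne ⟨m + 1, hm1⟩
      have c1 : (⟨m + 1, hm1⟩ : Fin (n+1)).castSucc = ⟨m + 1, Nat.lt_succ_of_lt hm1⟩ := rfl
      have c2 : (⟨m + 1, hm1⟩ : Fin (n+1)).succ = ⟨m + 1 + 1, Nat.succ_lt_succ hm1⟩ := rfl
      rw [c1, c2, extendConfig_mid x m _ (Nat.lt_of_succ_lt h),
        extendConfig_mid x (m + 1) _ h] at this
      exact this
    · have := hne ⟨n, Nat.lt_succ_self n⟩
      have c1 : (⟨n, Nat.lt_succ_self n⟩ : Fin (n+1)).castSucc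
          = ⟨n, Nat.lt_succ_of_lt (Nat.lt_succ_self n)⟩ := rfl
      have c2 : (⟨n, Nat.lt_succ_self n⟩ : Fin (n+1)).succ
          = ⟨n + 1, Nat.succ_lt_succ (Nat.lt_succ_self n)⟩ := rfl
      rw [c1, c2, extendConfig_last, extendConfig_n x hn] at this
      exact this
  · rintro ⟨hnorm, h0, hmid, hlast⟩
    refine ⟨hnorm, ?_⟩
    rintro ⟨m, hm⟩ heq
    rcases m with - | m'
    · have c1 : ((⟨0, hm⟩ : Fin (n+1)).castSucc) = ⟨0, Nat.succ_pos (n+1)⟩ := rfl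
      have c2 : ((⟨0, hm⟩ : Fin (n+1)).succ) = ⟨0 + 1, Nat.succ_lt_succ hm⟩ := rfl
      rw [c1, c2, extendConfig_zero, extendConfig_mid x 0 _ hn] at heq
      exact h0 heq
    · rcases Nat.lt_or_ge (m' + 1) n with hmn | hmn
      · have c1 : ((⟨m' + 1, hm⟩ : Fin (n+1)).castSucc) = ⟨m' + 1, Nat.lt_succ_of_lt hm⟩ := rfl
        have c2 : ((⟨m' + 1, hm⟩ : Fin (n+1)).succ) = ⟨m' + 1 + 1, Nat.succ_lt_succ hm⟩ := rfl
        rw [c1, c2, extendConfig_mid x m' _ (Nat.lt_of_succ_lt hmn),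
          extendConfig_mid x (m' + 1) _ hmn] at heq
        exact hmid m' hmn heq
      · have hm' : m' + 1 = n := by omega
        subst hm'
        have c1 : ((⟨m' + 1, hm⟩ : Fin (m'+1+1)).castSucc)
            = ⟨m' + 1, Nat.lt_succ_of_lt hm⟩ := rfl
        have c2 : ((⟨m' + 1, hm⟩ : Fin (m'+1+1)).succ)
            = ⟨m' + 1 + 1, Nat.succ_lt_succ hm⟩ := rfl
        rw [c1, c2, extendConfig_last, extendConfig_n x hn] at heq
        exact hlast heq

/-- angle coordinates of a configuration -/
def toAngles (A : ℂ) (n : ℕ) (x : Fin n → ℂ) : Fin n → ℝ :=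
  fun i => if _ : (i : ℕ) = 0 then relT A (x i)
    else relT (x ⟨(i : ℕ) - 1, Nat.lt_of_le_of_lt (Nat.sub_le _ _) i.isLt⟩) (x i)

section Main
variable {A B : ℂ} {n : ℕ}

lemma exp_ne_one_of_Ioo {t : ℝ} (ht : t ∈ Set.Ioo (0:ℝ) 1) :
    Complex.exp (2 * π * Complex.I * t) ≠ 1 := by
  intro h
  rw [Complex.exp_eq_one_iff] at h
  obtain ⟨z, hz⟩ := h
  have h2 : ((t : ℂ)) = (z : ℂ) := by
    have hne : (2 * (π : ℂ) * Complex.I) ≠ 0 :=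
      mul_ne_zero (mul_ne_zero two_ne_zero (Complex.ofReal_ne_zero.mpr Real.pi_ne_zero))
        Complex.I_ne_zero
    have h' : 2 * (π:ℂ) * Complex.I * (t:ℂ) = 2 * (π:ℂ) * Complex.I * (z:ℂ) := by
      rw [hz]; ring
    exact mul_left_cancel₀ hne h'
  have h3 : t = (z : ℝ) := by exact_mod_cast h2
  rcases ht with ⟨h4, h5⟩
  rw [h3] at h4 h5
  have : (0:ℤ) < z := by exact_mod_cast h4
  have : z < 1 := by exact_mod_cast h5
  omega

lemma exp_two_pi_eq_iff (s t : ℝ) :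
    Complex.exp (2 * π * Complex.I * s) = Complex.exp (2 * π * Complex.I * t)
      ↔ ∃ z : ℤ, s - t = (z : ℝ) := by
  rw [Complex.exp_eq_exp_iff_exists_int]
  constructor
  · rintro ⟨z, hz⟩
    refine ⟨z, ?_⟩
    have hne : (2 * (π : ℂ) * Complex.I) ≠ 0 :=
      mul_ne_zero (mul_ne_zero two_ne_zero (Complex.ofReal_ne_zero.mpr Real.pi_ne_zero))
        Complex.I_ne_zero
    have : 2 * (π:ℂ) * Complex.I * s = 2 * (π:ℂ) * Complex.I * (t + z) := by
      rw [hz]; ring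
    have h2 : ((s:ℂ)) = ((t:ℂ)) + z := mul_left_cancel₀ hne this
    have : s = t + (z:ℝ) := by exact_mod_cast h2
    linarith
  · rintro ⟨z, hz⟩
    refine ⟨z, ?_⟩
    have : s = t + (z:ℝ) := by linarith
    rw [this]; push_cast; ring

variable (hn : 1 ≤ n) (hA : ‖A‖ = 1)

include hA in
lemma toAngles_angleConfig {φ : Fin n → ℝ} (hφ : ∀ j, φ j ∈ Set.Ioo (0:ℝ) 1) :
    toAngles A n (angleConfig A n φ) = φ := by
  have hA0 : A ≠ 0 := by intro h; simp [h] at hA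
  funext i
  rcases i with ⟨m, hm⟩
  rcases m with - | m'
  · have : toAngles A n (angleConfig A n φ) ⟨0, hm⟩
        = relT A (angleConfig A n φ ⟨0, hm⟩) := by
      simp [toAngles]
    rw [this, angleConfig_eq, psum_zero hm φ]
    exact relT_eq hA0 (hφ _)
  · have hne : (m' + 1 : ℕ) ≠ 0 := Nat.succ_ne_zero m'
    have : toAngles A n (angleConfig A n φ) ⟨m' + 1, hm⟩
        = relT (angleConfig A n φ ⟨m' + 1 - 1, Nat.lt_of_le_of_lt (Nat.sub_le _ _) hm⟩)
            (angleConfig A n φ ⟨m' + 1, hm⟩) := by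
      simp [toAngles]
    rw [this]
    have e : (⟨m' + 1 - 1, Nat.lt_of_le_of_lt (Nat.sub_le _ _) hm⟩ : Fin n)
        = ⟨m', Nat.lt_of_succ_lt hm⟩ := rfl
    rw [e, angleConfig_succ φ m' hm]
    have h0 : angleConfig A n φ ⟨m', Nat.lt_of_succ_lt hm⟩ ≠ 0 := by
      intro h
      have := norm_angleConfig hA φ ⟨m', Nat.lt_of_succ_lt hm⟩
      rw [h] at this; simp at this
    exact relT_eq h0 (hφ _)

include hn hA in
lemma angleConfig_toAngles {x : Fin n → ℂ} (hx : x ∈ circleStringConfigSpace A B n) :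
    angleConfig A n (toAngles A n x) = x := by
  rw [mem_config_iff hn] at hx
  obtain ⟨hnorm, h0, hmid, -⟩ := hx
  funext i
  rcases i with ⟨m, hm⟩
  induction m with
  | zero =>
    have e : toAngles A n x ⟨0, hm⟩ = relT A (x ⟨0, hm⟩) := by simp [toAngles]
    rw [angleConfig_eq, psum_zero hm, e]
    have h0' : A ≠ x ⟨0, hm⟩ := h0
    exact mul_exp_relT hA (hnorm _) h0'
  | succ m' ih =>
    rw [angleConfig_succ _ m' hm]
    rw [ih (Nat.lt_of_succ_lt hm)]
    have e : toAngles A n x ⟨m' + 1, hm⟩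
        = relT (x ⟨m', Nat.lt_of_succ_lt hm⟩) (x ⟨m' + 1, hm⟩) := by
      simp [toAngles]
    rw [e]
    exact mul_exp_relT (hnorm _) (hnorm _) (hmid m' hm)

include hn hA in
lemma toAngles_mem_cube {x : Fin n → ℂ} (hx : x ∈ circleStringConfigSpace A B n) (i : Fin n) :
    toAngles A n x i ∈ Set.Ioo (0:ℝ) 1 := by
  rw [mem_config_iff hn] at hx
  obtain ⟨hnorm, h0, hmid, -⟩ := hx
  rcases i with ⟨m, hm⟩
  rcases m with - | m'
  · have e : toAngles A n x ⟨0, hm⟩ = relT A (x ⟨0, hm⟩) := by simp [toAngles]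
    rw [e]; exact relT_mem_Ioo hA (hnorm _) h0
  · have e : toAngles A n x ⟨m' + 1, hm⟩
        = relT (x ⟨m', Nat.lt_of_succ_lt hm⟩) (x ⟨m' + 1, hm⟩) := by simp [toAngles]
    rw [e]; exact relT_mem_Ioo (hnorm _) (hnorm _) (hmid m' hm)

include hn hA in
lemma angleConfig_mem_iff {ψ : ℝ} (hψ : ψ ∈ Set.Ioo (0:ℝ) 1)
    (hBψ : B = A * Complex.exp (2 * π * Complex.I * ψ))
    {φ : Fin n → ℝ} (hφ : ∀ j, φ j ∈ Set.Ioo (0:ℝ) 1) :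
    angleConfig A n φ ∈ circleStringConfigSpace A B n ↔
      ¬∃ z : ℤ, (∑ j, φ j) - ψ = (z : ℝ) := by
  have hA0 : A ≠ 0 := by intro h; simp [h] at hA
  have hac0 : ∀ i, angleConfig A n φ i ≠ 0 := by
    intro i h
    have := norm_angleConfig hA φ i
    rw [h] at this; simp at this
  have hlast_eq : angleConfig A n φ ⟨n - 1, Nat.sub_lt hn Nat.one_pos⟩
      = A * Complex.exp (2 * π * Complex.I * ((∑ j, φ j : ℝ) : ℂ)) := by
    rw [angleConfig_eq, psum_last hn φ]
  rw [mem_config_iff hn]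
  constructor
  · rintro ⟨-, -, -, hlast⟩ ⟨z, hz⟩
    apply hlast
    rw [hlast_eq, hBψ]
    congr 1
    exact (exp_two_pi_eq_iff _ _).mpr ⟨z, hz⟩
  · intro hnone
    refine ⟨norm_angleConfig hA φ, ?_, ?_, ?_⟩
    · intro h
      rw [angleConfig_eq, psum_zero hn] at h
      have h1 : A * 1 = A * Complex.exp (2 * π * Complex.I * (φ ⟨0, hn⟩ : ℝ)) := by
        rw [mul_one]; exact h
      exact exp_ne_one_of_Ioo (hφ _) (mul_left_cancel₀ hA0 h1).symm
    · intro m h heq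
      rw [angleConfig_succ φ m h] at heq
      have h1 : angleConfig A n φ ⟨m, Nat.lt_of_succ_lt h⟩ * 1
          = angleConfig A n φ ⟨m, Nat.lt_of_succ_lt h⟩
            * Complex.exp (2 * π * Complex.I * (φ ⟨m + 1, h⟩ : ℝ)) := by
        rw [mul_one]; exact heq
      exact exp_ne_one_of_Ioo (hφ _) (mul_left_cancel₀ (hac0 _) h1).symm
    · intro heq
      rw [hlast_eq, hBψ] at heq
      have h2 := mul_left_cancel₀ hA0 heq
      exact hnone ((exp_two_pi_eq_iff _ _).mp h2)

include hn hA in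
lemma continuous_toAngles_restrict :
    Continuous (fun y : ↥(circleStringConfigSpace A B n) => toAngles A n y.1) := by
  apply continuous_pi
  intro i
  rw [continuous_iff_continuousAt]
  intro y
  obtain ⟨hnorm, h0, hmid, -⟩ := (mem_config_iff hn y.1).mp y.2
  rcases i with ⟨m, hm⟩
  rcases m with - | m'
  · have e : (fun y : ↥(circleStringConfigSpace A B n) => toAngles A n y.1 ⟨0, hm⟩)
        = fun y => relT A (y.1 ⟨0, hm⟩) := by
      funext y; simp [toAngles]
    rw [e]
    have hcont : ContinuousAt (fun p : ℂ × ℂ => relT p.1 p.2) (A, y.1 ⟨0, hm⟩) :=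
      continuousAt_relT hA (hnorm _) h0
    have hin : ContinuousAt
        (fun y : ↥(circleStringConfigSpace A B n) => (A, y.1 ⟨0, hm⟩)) y :=
      Continuous.continuousAt
        (continuous_const.prodMk ((continuous_apply _).comp continuous_subtype_val))
    exact ContinuousAt.comp (g := fun p : ℂ × ℂ => relT p.1 p.2)
      (f := fun y : ↥(circleStringConfigSpace A B n) => (A, y.1 ⟨0, hm⟩)) hcont hin
  · have e : (fun y : ↥(circleStringConfigSpace A B n) => toAngles A n y.1 ⟨m' + 1, hm⟩)
        = fun y => relT (y.1 ⟨m', Nat.lt_of_succ_lt hm⟩) (y.1 ⟨m' + 1, hm⟩) := by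
      funext y; simp [toAngles]
    rw [e]
    have hcont : ContinuousAt (fun p : ℂ × ℂ => relT p.1 p.2)
        (y.1 ⟨m', Nat.lt_of_succ_lt hm⟩, y.1 ⟨m' + 1, hm⟩) :=
      continuousAt_relT (hnorm _) (hnorm _) (hmid m' hm)
    have hin : ContinuousAt
        (fun y : ↥(circleStringConfigSpace A B n) =>
          (y.1 ⟨m', Nat.lt_of_succ_lt hm⟩, y.1 ⟨m' + 1, hm⟩)) y :=
      Continuous.continuousAt
        (((continuous_apply _).comp continuous_subtype_val).prodMk
          ((continuous_apply _).comp continuous_subtype_val))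
    exact ContinuousAt.comp (g := fun p : ℂ × ℂ => relT p.1 p.2)
      (f := fun y : ↥(circleStringConfigSpace A B n) =>
        (y.1 ⟨m', Nat.lt_of_succ_lt hm⟩, y.1 ⟨m' + 1, hm⟩)) hcont hin

lemma continuous_angleConfig : Continuous (angleConfig A n) := by
  apply continuous_pi
  intro i
  apply Continuous.mul continuous_const
  apply Complex.continuous_exp.comp
  apply Continuous.mul continuous_const
  exact Complex.continuous_ofReal.comp (by
    apply continuous_finset_sum
    intro j _
    exact continuous_apply j)

end Main

def cubeSet (n : ℕ) : Set (Fin n → ℝ) := {φ | ∀ j, φ j ∈ Set.Ioo (0:ℝ) 1}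

def pieceSet (n : ℕ) (ψ : ℝ) (k : Fin (n+1)) : Set (Fin n → ℝ) :=
  {φ | φ ∈ cubeSet n ∧ (ψ + (k:ℝ) - 1 < ∑ j, φ j ∧ ∑ j, φ j < ψ + (k:ℝ))}

section Pieces
variable {n : ℕ} {ψ : ℝ}

lemma sum_mem_of_cube (hn : 1 ≤ n) {φ : Fin n → ℝ} (hφ : φ ∈ cubeSet n) :
    (∑ j, φ j) ∈ Set.Ioo (0:ℝ) n := by
  constructor
  · exact Finset.sum_pos (fun j _ => (hφ j).1) ⟨⟨0, hn⟩, Finset.mem_univ _⟩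
  · have hne : (Finset.univ : Finset (Fin n)).Nonempty := ⟨⟨0, hn⟩, Finset.mem_univ _⟩
    calc (∑ j, φ j) < ∑ _j : Fin n, (1:ℝ) :=
          Finset.sum_lt_sum_of_nonempty hne (fun j _ => (hφ j).2)
      _ = n := by simp

lemma exists_mem_pieceSet (hn : 1 ≤ n) (hψ : ψ ∈ Set.Ioo (0:ℝ) 1) {φ : Fin n → ℝ}
    (hφ : φ ∈ cubeSet n) (hni : ¬∃ z : ℤ, (∑ j, φ j) - ψ = (z : ℝ)) :
    ∃ k : Fin (n+1), φ ∈ pieceSet n ψ k := by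
  obtain ⟨hs0, hsn⟩ := sum_mem_of_cube hn hφ
  set s := ∑ j, φ j with hs
  set c := ⌈s - ψ⌉ with hc
  have h1 : (c : ℝ) - 1 < s - ψ := by
    have := Int.ceil_lt_add_one (s - ψ)
    linarith
  have h2 : s - ψ < c := lt_of_le_of_ne (Int.le_ceil _) (by
    intro h; exact hni ⟨c, h⟩)
  have hc0 : 0 ≤ c := by
    by_contra h
    push_neg at h
    have hz1 : c ≤ -1 := by omega
    have h' : (c : ℝ) ≤ -1 := by exact_mod_cast hz1
    have := hψ.2
    linarith
  have hcn : c ≤ n := by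
    have h3 : (c : ℝ) < s - ψ + 1 := by linarith
    have h4 : s - ψ + 1 < n + 1 := by
      have := hψ.1; linarith
    have : (c : ℝ) < (n : ℝ) + 1 := by linarith
    have : c < (n : ℤ) + 1 := by exact_mod_cast this
    omega
  have hcast : (((⟨c.toNat, by omega⟩ : Fin (n+1)) : ℕ) : ℝ) = (c : ℝ) := by
    simp only [Fin.val_mk]
    exact_mod_cast congrArg (Int.cast : ℤ → ℝ) (Int.toNat_of_nonneg hc0)
  refine ⟨⟨c.toNat, by omega⟩, hφ, ?_, ?_⟩
  · rw [hcast]; linarith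
  · rw [hcast]; linarith

lemma pieceSet_not_int {φ : Fin n → ℝ} {k : Fin (n+1)} (h : φ ∈ pieceSet n ψ k) :
    ¬∃ z : ℤ, (∑ j, φ j) - ψ = (z : ℝ) := by
  rintro ⟨z, hz⟩
  obtain ⟨-, h1, h2⟩ := h
  have g1 : ((k : ℕ) : ℝ) - 1 < (z : ℝ) := by linarith
  have g2 : (z : ℝ) < ((k : ℕ) : ℝ) := by linarith
  have g1' : ((k : ℕ) : ℤ) - 1 < z := by exact_mod_cast g1
  have g2' : z < ((k : ℕ) : ℤ) := by exact_mod_cast g2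
  omega

lemma pieceSet_pairwiseDisjoint :
    (Set.univ : Set (Fin (n+1))).PairwiseDisjoint (pieceSet n ψ) := by
  intro k _ l _ hkl
  rw [Function.onFun]
  rw [Set.disjoint_left]
  rintro φ ⟨-, h1, h2⟩ ⟨-, h3, h4⟩
  rcases Nat.lt_or_ge (k : ℕ) (l : ℕ) with h | h
  · have : ((k : ℕ) : ℝ) + 1 ≤ ((l : ℕ) : ℝ) := by exact_mod_cast h
    linarith
  · have h' : (l : ℕ) < (k : ℕ) := by
      rcases Nat.lt_or_ge (l : ℕ) (k : ℕ) with h' | h'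
      · exact h'
      · exact absurd (Fin.ext (le_antisymm h h')).symm hkl
    have : ((l : ℕ) : ℝ) + 1 ≤ ((k : ℕ) : ℝ) := by exact_mod_cast h'
    linarith

lemma convex_cubeSet : Convex ℝ (cubeSet n) := by
  have : cubeSet n = Set.pi Set.univ (fun _ : Fin n => Set.Ioo (0:ℝ) 1) := by
    ext φ; simp [cubeSet, Set.mem_pi]
  rw [this]
  exact convex_pi (fun _ _ => convex_Ioo _ _)

lemma isLinearMap_sum : IsLinearMap ℝ (fun φ : Fin n → ℝ => ∑ j, φ j) := by
  constructor
  · intro x y; simp [Finset.sum_add_distrib]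
  · intro c x; simp [Finset.mul_sum]

lemma pieceSet_convex (k : Fin (n+1)) : Convex ℝ (pieceSet n ψ k) := by
  have : pieceSet n ψ k = (cubeSet n) ∩
      ({φ | ψ + (k:ℝ) - 1 < ∑ j, φ j} ∩ {φ | ∑ j, φ j < ψ + (k:ℝ)}) := by
    ext φ; simp only [pieceSet, Set.mem_inter_iff, Set.mem_setOf_eq, and_assoc]
  rw [this]
  exact convex_cubeSet.inter ((convex_halfSpace_gt isLinearMap_sum _).inter
    (convex_halfSpace_lt isLinearMap_sum _))

lemma isOpen_cubeSet : IsOpen (cubeSet n) := by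
  have : cubeSet n = Set.pi Set.univ (fun _ : Fin n => Set.Ioo (0:ℝ) 1) := by
    ext φ; simp [cubeSet, Set.mem_pi]
  rw [this]
  exact isOpen_set_pi Set.finite_univ (fun _ _ => isOpen_Ioo)

lemma continuous_sum_coords : Continuous (fun φ : Fin n → ℝ => ∑ j, φ j) :=
  continuous_finset_sum _ (fun j _ => continuous_apply j)

lemma isOpen_pieceSet (k : Fin (n+1)) : IsOpen (pieceSet n ψ k) := by
  have : pieceSet n ψ k = (cubeSet n) ∩
      ({φ | ψ + (k:ℝ) - 1 < ∑ j, φ j} ∩ {φ | ∑ j, φ j < ψ + (k:ℝ)}) := by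
    ext φ; simp only [pieceSet, Set.mem_inter_iff, Set.mem_setOf_eq, and_assoc]
  rw [this]
  exact isOpen_cubeSet.inter ((isOpen_lt continuous_const continuous_sum_coords).inter
    (isOpen_lt continuous_sum_coords continuous_const))

lemma pieceSet_nonempty (hn : 1 ≤ n) (hψ : ψ ∈ Set.Ioo (0:ℝ) 1) (k : Fin (n+1)) :
    (pieceSet n ψ k).Nonempty := by
  have hkn : (k : ℕ) ≤ n := by omega
  have hkR : ((k : ℕ) : ℝ) ≤ (n : ℝ) := by exact_mod_cast hkn
  set a := max 0 (ψ + (k:ℝ) - 1) with ha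
  set b := min (n : ℝ) (ψ + (k:ℝ)) with hb
  have hab : a < b := by
    rcases hψ with ⟨hψ0, hψ1⟩
    have h0n : (0:ℝ) < n := by exact_mod_cast hn
    apply max_lt <;> [skip; skip] <;> apply lt_min
    · exact h0n
    · positivity
    · linarith
    · linarith
  set s := (a + b) / 2 with hs
  have hsa : a < s := by rw [hs]; linarith
  have hsb : s < b := by rw [hs]; linarith
  have hs0 : 0 < s := lt_of_le_of_lt (le_max_left _ _) hsa
  have hsn : s < n := lt_of_lt_of_le hsb (min_le_left _ _)
  have hn0 : (0:ℝ) < n := by exact_mod_cast hn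
  refine ⟨fun _ => s / n, ?_, ?_, ?_⟩
  · intro j
    constructor
    · positivity
    · rw [div_lt_one hn0]; exact hsn
  · have : (∑ _j : Fin n, s / n) = s := by
      rw [Finset.sum_const]
      simp only [Finset.card_univ, Fintype.card_fin, nsmul_eq_mul]
      field_simp
    rw [this]
    calc ψ + (k:ℝ) - 1 ≤ a := le_max_right _ _
    _ < s := hsa
  · have : (∑ _j : Fin n, s / n) = s := by
      rw [Finset.sum_const]
      simp only [Finset.card_univ, Fintype.card_fin, nsmul_eq_mul]
      field_simp
    rw [this]
    calc s < b := hsb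
    _ ≤ ψ + (k:ℝ) := min_le_right _ _

lemma iUnion_pieceSet (hn : 1 ≤ n) (hψ : ψ ∈ Set.Ioo (0:ℝ) 1) :
    (⋃ k, pieceSet n ψ k)
      = cubeSet n \ {φ | ∃ k : ℕ, k < n ∧ ∑ j, φ j = ψ + (k : ℝ)} := by
  ext φ
  simp only [Set.mem_iUnion, Set.mem_diff, Set.mem_setOf_eq]
  constructor
  · rintro ⟨k, hk⟩
    refine ⟨hk.1, ?_⟩
    rintro ⟨m, hmn, hm⟩
    apply pieceSet_not_int hk
    exact ⟨m, by rw [hm]; push_cast; ring⟩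
  · rintro ⟨hcube, hno⟩
    apply exists_mem_pieceSet hn hψ hcube
    rintro ⟨z, hz⟩
    obtain ⟨hs0, hsn⟩ := sum_mem_of_cube hn hcube
    have hz0 : 0 ≤ z := by
      by_contra h
      push_neg at h
      have hz1 : z ≤ -1 := by omega
      have : (z : ℝ) ≤ -1 := by exact_mod_cast hz1
      have := hψ.2
      linarith
    have hzn : z < n := by
      have : (z : ℝ) < (n : ℝ) := by
        have := hψ.1
        linarith
      exact_mod_cast this
    refine hno ⟨z.toNat, ?_, ?_⟩
    · omega
    · have hcast : ((z.toNat : ℕ) : ℝ) = (z : ℝ) := by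
        exact_mod_cast congrArg (Int.cast : ℤ → ℝ) (Int.toNat_of_nonneg hz0)
      rw [hcast]
      linarith
end Pieces

section Topo
variable {n : ℕ} {A B : ℂ} {ψ : ℝ}

def Wset (A B : ℂ) (n : ℕ) (ψ : ℝ) (k : Fin (n+1)) :
    Set ↥(circleStringConfigSpace A B n) :=
  {y | toAngles A n y.1 ∈ pieceSet n ψ k}

variable (hn : 1 ≤ n) (hA : ‖A‖ = 1) (hψ : ψ ∈ Set.Ioo (0:ℝ) 1)
  (hBψ : B = A * Complex.exp (2 * π * Complex.I * ψ))

include hn hA hψ hBψ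

lemma toAngles_not_int (y : ↥(circleStringConfigSpace A B n)) :
    ¬∃ z : ℤ, (∑ j, toAngles A n y.1 j) - ψ = (z : ℝ) := by
  have hy : angleConfig A n (toAngles A n y.1) ∈ circleStringConfigSpace A B n := by
    rw [angleConfig_toAngles hn hA y.2]; exact y.2
  exact (angleConfig_mem_iff hn hA hψ hBψ (toAngles_mem_cube hn hA y.2)).mp hy

lemma mem_W_total (y : ↥(circleStringConfigSpace A B n)) :
    ∃ k, y ∈ Wset A B n ψ k :=
  exists_mem_pieceSet hn hψ (fun j => toAngles_mem_cube hn hA y.2 j)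
    (toAngles_not_int hn hA hψ hBψ y)

omit hn hA hψ hBψ in
lemma W_unique {y : ↥(circleStringConfigSpace A B n)} {k l : Fin (n+1)}
    (h1 : y ∈ Wset A B n ψ k) (h2 : y ∈ Wset A B n ψ l) : k = l := by
  by_contra hne
  have hd := pieceSet_pairwiseDisjoint (n := n) (ψ := ψ) (Set.mem_univ k) (Set.mem_univ l) hne
  exact Set.disjoint_left.mp hd h1 h2

omit hψ hBψ in
lemma isOpen_W (k : Fin (n+1)) : IsOpen (Wset A B n ψ k) :=
  (isOpen_pieceSet k).preimage (continuous_toAngles_restrict hn hA)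

lemma isClosed_W (k : Fin (n+1)) : IsClosed (Wset A B n ψ k) := by
  rw [← isOpen_compl_iff]
  have hcompl : (Wset A B n ψ k)ᶜ = ⋃ l, ⋃ (_ : l ≠ k), Wset A B n ψ l := by
    ext y
    simp only [Set.mem_compl_iff, Set.mem_iUnion]
    constructor
    · intro hy
      obtain ⟨l, hl⟩ := mem_W_total hn hA hψ hBψ y
      exact ⟨l, fun h => hy (h ▸ hl), hl⟩
    · rintro ⟨l, hlk, hl⟩ hk
      exact hlk (W_unique hl hk)
  rw [hcompl]
  exact isOpen_iUnion fun l => isOpen_iUnion fun _ => isOpen_W hn hA l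

def homeoW (k : Fin (n+1)) : ↥(Wset A B n ψ k) ≃ₜ ↥(pieceSet n ψ k) where
  toFun y := ⟨toAngles A n y.1.1, y.2⟩
  invFun φ := ⟨⟨angleConfig A n φ.1,
      (angleConfig_mem_iff hn hA hψ hBψ (fun j => φ.2.1 j)).mpr (pieceSet_not_int φ.2)⟩, by
    show toAngles A n (angleConfig A n φ.1) ∈ pieceSet n ψ k
    rw [toAngles_angleConfig hA (fun j => φ.2.1 j)]
    exact φ.2⟩
  left_inv y := by
    apply Subtype.ext; apply Subtype.ext
    exact angleConfig_toAngles hn hA y.1.2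
  right_inv φ := by
    apply Subtype.ext
    exact toAngles_angleConfig hA (fun j => φ.2.1 j)
  continuous_toFun := by
    apply Continuous.subtype_mk
    exact (continuous_toAngles_restrict hn hA).comp continuous_subtype_val
  continuous_invFun := by
    apply Continuous.subtype_mk
    apply Continuous.subtype_mk
    exact continuous_angleConfig.comp continuous_subtype_val

lemma isPathConnected_W (k : Fin (n+1)) : IsPathConnected (Wset A B n ψ k) := by
  have hpc : IsPathConnected (pieceSet n ψ k) :=
    (pieceSet_convex k).isPathConnected (pieceSet_nonempty hn hψ k)
  haveI hps : PathConnectedSpace ↥(pieceSet n ψ k) :=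
    isPathConnected_iff_pathConnectedSpace.mp hpc
  rw [isPathConnected_iff_pathConnectedSpace]
  set e := homeoW hn hA hψ hBψ k with he
  refine ⟨hps.nonempty.map e.symm, fun x y => ?_⟩
  obtain ⟨p⟩ := hps.joined (e x) (e y)
  have j : Joined (e.symm (e x)) (e.symm (e y)) := ⟨p.map e.symm.continuous⟩
  simpa using j

lemma pathComponent_eq_W {y : ↥(circleStringConfigSpace A B n)} {k : Fin (n+1)}
    (hy : y ∈ Wset A B n ψ k) : pathComponent y = Wset A B n ψ k := by
  apply Set.Subset.antisymm
  · intro z hz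
    obtain ⟨p⟩ := (mem_pathComponent_iff).mp hz
    set s : Set unitInterval := (fun t => p t) ⁻¹' (Wset A B n ψ k) with hs
    have hop : IsOpen s := (isOpen_W hn hA k).preimage p.continuous
    have hcl : IsClosed s := (isClosed_W hn hA hψ hBψ k).preimage p.continuous
    have hne : (0 : unitInterval) ∈ s := by
      show p 0 ∈ Wset A B n ψ k
      rw [p.source]; exact hy
    have huniv : s = Set.univ := IsClopen.eq_univ ⟨hcl, hop⟩ ⟨0, hne⟩
    have h1 : (1 : unitInterval) ∈ s := huniv ▸ Set.mem_univ _
    have : p 1 ∈ Wset A B n ψ k := h1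
    rwa [p.target] at this
  · exact (isPathConnected_W hn hA hψ hBψ k).subset_pathComponent hy

lemma exists_W_mem (k : Fin (n+1)) : ∃ y, y ∈ Wset A B n ψ k := by
  obtain ⟨φ, hφ⟩ := pieceSet_nonempty hn hψ k
  refine ⟨⟨angleConfig A n φ,
    (angleConfig_mem_iff hn hA hψ hBψ (fun j => hφ.1 j)).mpr (pieceSet_not_int hφ)⟩, ?_⟩
  show toAngles A n (angleConfig A n φ) ∈ pieceSet n ψ k
  rw [toAngles_angleConfig hA (fun j => hφ.1 j)]
  exact hφ

lemma card_zeroth :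
    Nat.card (ZerothHomotopy ↥(circleStringConfigSpace A B n)) = n + 1 := by
  classical
  let f : ↥(circleStringConfigSpace A B n) → Fin (n+1) :=
    fun y => (mem_W_total hn hA hψ hBψ y).choose
  have hf : ∀ y, y ∈ Wset A B n ψ (f y) := fun y => (mem_W_total hn hA hψ hBψ y).choose_spec
  have hresp : ∀ y z : ↥(circleStringConfigSpace A B n), Joined y z → f y = f z := by
    intro y z h
    have hz : z ∈ Wset A B n ψ (f y) := by
      have hpc := pathComponent_eq_W hn hA hψ hBψ (hf y)
      rw [← hpc]
      exact h
    exact W_unique hz (hf z)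
  let E : ZerothHomotopy ↥(circleStringConfigSpace A B n) → Fin (n+1) :=
    Quotient.lift f (fun a b h => hresp a b h)
  have hbij : Function.Bijective E := by
    constructor
    · intro a b
      refine Quotient.inductionOn₂ a b ?_
      intro y z h
      have h' : f y = f z := h
      have hz : z ∈ Wset A B n ψ (f y) := h' ▸ hf z
      have hj : JoinedIn (Wset A B n ψ (f y)) y z :=
        (isPathConnected_W hn hA hψ hBψ (f y)).joinedIn y (hf y) z hz
      exact Quotient.sound hj.joined
    · intro k
      obtain ⟨y, hy⟩ := exists_W_mem hn hA hψ hBψ k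
      exact ⟨Quotient.mk _ y, W_unique (hf y) hy⟩
  exact Nat.card_eq_of_equiv_fin (Equiv.ofBijective E hbij)

lemma contractible_pathComponent (y : ↥(circleStringConfigSpace A B n)) :
    ContractibleSpace ↥(pathComponent y) := by
  obtain ⟨k, hk⟩ := mem_W_total hn hA hψ hBψ y
  have hpc := pathComponent_eq_W hn hA hψ hBψ hk
  haveI hcs : ContractibleSpace ↥(pieceSet n ψ k) :=
    (pieceSet_convex k).contractibleSpace (pieceSet_nonempty hn hψ k)
  exact ((Homeomorph.setCongr hpc).trans (homeoW hn hA hψ hBψ k)).contractibleSpace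

lemma catLE_upper : CatLE ↥(circleStringConfigSpace A B n) (n + 1) := by
  refine ⟨Wset A B n ψ, fun k => isOpen_W hn hA k, ?_, ?_⟩
  · ext y
    simp only [Set.mem_iUnion, Set.mem_univ, iff_true]
    exact mem_W_total hn hA hψ hBψ y
  · intro k
    haveI hcs : ContractibleSpace ↥(pieceSet n ψ k) :=
      (pieceSet_convex k).contractibleSpace (pieceSet_nonempty hn hψ k)
    haveI : ContractibleSpace ↥(Wset A B n ψ k) :=
      (homeoW hn hA hψ hBψ k).contractibleSpace
    obtain ⟨y0, h⟩ := id_nullhomotopic ↥(Wset A B n ψ k)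
    refine ⟨(⟨Subtype.val, continuous_subtype_val⟩ :
      C(↥(Wset A B n ψ k), ↥(circleStringConfigSpace A B n))) y0, ?_⟩
    have h2 := ContinuousMap.Homotopic.comp
      (ContinuousMap.Homotopic.refl (⟨Subtype.val, continuous_subtype_val⟩ :
        C(↥(Wset A B n ψ k), ↥(circleStringConfigSpace A B n)))) h
    rwa [ContinuousMap.comp_id, ContinuousMap.comp_const] at h2

lemma catLE_lower {N : ℕ} (h : CatLE ↥(circleStringConfigSpace A B n) N) :
    n + 1 ≤ N := by
  classical
  obtain ⟨U, hopen, hcover, hcontr⟩ := h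
  choose y0 hy0 using hcontr
  have hjoin : ∀ i (u : ↥(U i)), Joined u.1 (y0 i) := by
    intro i u
    obtain ⟨H⟩ := hy0 i
    exact ⟨H.evalAt u⟩
  choose w hw using exists_W_mem hn hA hψ hBψ
  have hcov : ∀ k, ∃ i, (w k : ↥(circleStringConfigSpace A B n)) ∈ U i := by
    intro k
    have : (w k) ∈ ⋃ i, U i := hcover ▸ Set.mem_univ _
    simpa using this
  choose κ hκ using hcov
  have hinj : Function.Injective κ := by
    intro k l hkl
    have j1 : Joined (w k) (y0 (κ k)) := hjoin (κ k) ⟨w k, hκ k⟩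
    have j2 : Joined (w l) (y0 (κ l)) := hjoin (κ l) ⟨w l, hκ l⟩
    rw [hkl] at j1
    have hjoined : Joined (w k) (w l) := j1.trans j2.symm
    have hmem : (w l) ∈ pathComponent (w k) := hjoined
    rw [pathComponent_eq_W hn hA hψ hBψ (hw k)] at hmem
    exact W_unique hmem (hw l)
  calc n + 1 = Fintype.card (Fin (n+1)) := by simp
  _ ≤ Fintype.card (Fin N) := Fintype.card_le_of_injective κ hinj
  _ = N := by simp

lemma lscat_eq : LScat ↥(circleStringConfigSpace A B n) = ((n : ℕ∞) + 1) := by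
  have hc : ((n + 1 : ℕ) : ℕ∞) = (n : ℕ∞) + 1 := by push_cast; ring
  apply le_antisymm
  · rw [← hc]
    exact sInf_le ⟨n + 1, rfl, catLE_upper hn hA hψ hBψ⟩
  · apply le_sInf
    rintro N ⟨k, rfl, hk⟩
    have := catLE_lower hn hA hψ hBψ hk
    rw [← hc]
    exact_mod_cast this

end Topo

/-- **Statement 17.**  For distinct `A, B` on the unit circle and `n ≥ 1`:
the space `G(S^1;A,B,n)` has exactly `n+1` path components, each contractible, so
`cat G(S^1;A,B,n) = n+1`; in angle coordinates a point of the open cube `(0,1)^n`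
yields a configuration iff `∑ φ_j - ψ` is not an integer, and the complement of the
hyperplanes `∑ φ_j = ψ + k` (`k = 0,…,n-1`) in the open cube is a disjoint union of
`n+1` nonempty convex (hence contractible) pieces. -/
theorem circle_string_config_space (n : ℕ) (hn : 1 ≤ n) (A B : ℂ)
    (hA : ‖A‖ = 1) (hB : ‖B‖ = 1) (hAB : A ≠ B) :
    -- exactly `n+1` path components
    Nat.card (ZerothHomotopy ↥(circleStringConfigSpace A B n)) = n + 1 ∧
    -- each path component is contractible
    (∀ y : ↥(circleStringConfigSpace A B n), ContractibleSpace ↥(pathComponent y)) ∧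
    -- the Lusternik–Schnirelman category equals `n+1`
    LScat ↥(circleStringConfigSpace A B n) = (n + 1 : ℕ∞) ∧
    -- the concrete description in angle coordinates
    (∀ ψ : ℝ, ψ ∈ Set.Ioo (0 : ℝ) 1 →
      B = A * Complex.exp (2 * π * Complex.I * ψ) →
      -- membership criterion
      ((∀ φ : Fin n → ℝ, (∀ j, φ j ∈ Set.Ioo (0 : ℝ) 1) →
          (angleConfig A n φ ∈ circleStringConfigSpace A B n ↔
            ¬∃ z : ℤ, (∑ j, φ j) - ψ = (z : ℝ))) ∧
        -- the `n+1` pieces cut out by the hyperplanes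
        (let cube : Set (Fin n → ℝ) := {φ | ∀ j, φ j ∈ Set.Ioo (0 : ℝ) 1}
         let piece : Fin (n + 1) → Set (Fin n → ℝ) := fun k =>
           {φ ∈ cube | ψ + (k : ℝ) - 1 < ∑ j, φ j ∧ ∑ j, φ j < ψ + (k : ℝ)}
         (⋃ k, piece k) =
             cube \ {φ | ∃ k : ℕ, k < n ∧ ∑ j, φ j = ψ + (k : ℝ)} ∧
           (Set.univ : Set (Fin (n + 1))).PairwiseDisjoint piece ∧
           ∀ k, Convex ℝ (piece k) ∧ (piece k).Nonempty))) := by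
  have hpsi : relT A B ∈ Set.Ioo (0:ℝ) 1 := relT_mem_Ioo hA hB hAB
  have hBpsi : B = A * Complex.exp (2 * π * Complex.I * relT A B) :=
    (mul_exp_relT hA hB hAB).symm
  refine ⟨card_zeroth hn hA hpsi hBpsi, fun y => contractible_pathComponent hn hA hpsi hBpsi y,
    ?_, ?_⟩
  · have := lscat_eq hn hA hpsi hBpsi
    rw [this]
  · intro ψ hψ hBψ
    refine ⟨fun φ hφ => angleConfig_mem_iff hn hA hψ hBψ hφ, ?_⟩
    exact ⟨iUnion_pieceSet hn hψ, pieceSet_pairwiseDisjoint,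
      fun k => ⟨pieceSet_convex k, pieceSet_nonempty hn hψ k⟩⟩

end
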